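/- The minimum classical extension of IA₁ + AC₀₁ is IA₁ + AC₀₁ + (AC₀₁)^g, where (AC₀₁)^g is the schema of Gödel–Gentzen negative translations of all instances of AC₀₁. -/

import Mathlib

/-!
A deep embedding of the two-sorted language of intuitionistic analysis
(Kleene-Vesley), with number variables and one-place function (choice
sequence) variables, finitely many constants for primitive recursive
function(al)s (successor, +, ·, truncated subtraction ∸, pairing ⟨·,·⟩,
finite-sequence coding: concatenation *, singleton code ⟨s⟩, empty code ⟨⟩,
length lh, the Seq predicate, Kleene's T-predicate and U-function, and the
course-of-values functional ᾱ(x)), λ-abstraction with λ-reduction,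
intuitionistic two-sorted predicate logic, the Gödel–Gentzen negative
translation g, and the axiom schemas of the paper
"Calibrating the negative interpretation" (J.R. Moschovakis).
-/

namespace NegInterp

/-! Terms (type 0) and functors (type 1). -/
mutual
inductive Term : Type
  | var   : ℕ → Term
  | zero  : Term
  | succ  : Term → Term
  | add   : Term → Term → Term
  | mul   : Term → Term → Term
  | sub   : Term → Term → Term           -- truncated subtraction
  | pair  : Term → Term → Term           -- ⟨s,t⟩
  | cat   : Term → Term → Term           -- concatenation w ∗ v of sequence codes
  | sing  : Term → Term                  -- ⟨s⟩
  | empt  : Term                         -- ⟨ ⟩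
  | lh    : Term → Term                  -- length of a sequence code
  | seqc  : Term → Term                  -- characteristic function of Seq
  | kT    : Term → Term → Term → Term    -- characteristic function of Kleene's T
  | kU    : Term → Term                  -- Kleene's result-extraction U
  | app   : Func → Term → Term           -- φ(t)
  | bar   : Func → Term → Term           -- ᾱ(t), the code of (α(0),…,α(t−1))
inductive Func : Type
  | fvar : ℕ → Func
  | lam  : ℕ → Term → Func               -- λx.t
end

open Term Func

/-- Coding of finite sequences of naturals by naturals (every natural is a code). -/
def listCode (l : List ℕ) : ℕ := Encodable.encode l
def listDec (n : ℕ) : List ℕ := Denumerable.ofNat (List ℕ) n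

/-- Kleene's T-predicate: y codes a (fuel, value) pair witnessing that the
machine with code e halts on input x with the given value. -/
def KTmeta (e x y : ℕ) : Prop :=
  Nat.Partrec.Code.evaln y.unpair.1 (Denumerable.ofNat Nat.Partrec.Code e) x = some y.unpair.2

instance (e x y : ℕ) : Decidable (KTmeta e x y) := by unfold KTmeta; infer_instance

/-! Standard (full classical ω-model) interpretation of terms and functors,
used only to state the defining axioms of the primitive recursive constants. -/
mutual
def evalT (ρ : ℕ → ℕ) (σ : ℕ → ℕ → ℕ) : Term → ℕ
  | .var n => ρ n
  | .zero => 0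
  | .succ t => evalT ρ σ t + 1
  | .add s t => evalT ρ σ s + evalT ρ σ t
  | .mul s t => evalT ρ σ s * evalT ρ σ t
  | .sub s t => evalT ρ σ s - evalT ρ σ t
  | .pair s t => Nat.pair (evalT ρ σ s) (evalT ρ σ t)
  | .cat s t => listCode (listDec (evalT ρ σ s) ++ listDec (evalT ρ σ t))
  | .sing t => listCode [evalT ρ σ t]
  | .empt => listCode []
  | .lh t => (listDec (evalT ρ σ t)).length
  | .seqc _ => 0      -- under this coding every number codes a finite sequence
  | .kT e x y => if KTmeta (evalT ρ σ e) (evalT ρ σ x) (evalT ρ σ y) then 0 else 1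
  | .kU y => (Nat.unpair (evalT ρ σ y)).2
  | .app φ t => evalF ρ σ φ (evalT ρ σ t)
  | .bar φ t => listCode ((List.range (evalT ρ σ t)).map (evalF ρ σ φ))
def evalF (ρ : ℕ → ℕ) (σ : ℕ → ℕ → ℕ) : Func → ℕ → ℕ
  | .fvar n => σ n
  | .lam x t => fun m => evalT (Function.update ρ x m) σ t
end

/-! Free number variables of a term / functor. -/
mutual
def tFN : Term → Set ℕ
  | .var n => {n}
  | .zero => ∅
  | .empt => ∅
  | .succ t => tFN t
  | .sing t => tFN t
  | .lh t => tFN t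
  | .seqc t => tFN t
  | .kU t => tFN t
  | .add s t => tFN s ∪ tFN t
  | .mul s t => tFN s ∪ tFN t
  | .sub s t => tFN s ∪ tFN t
  | .pair s t => tFN s ∪ tFN t
  | .cat s t => tFN s ∪ tFN t
  | .kT e x y => tFN e ∪ tFN x ∪ tFN y
  | .app φ t => fFN φ ∪ tFN t
  | .bar φ t => fFN φ ∪ tFN t
def fFN : Func → Set ℕ
  | .fvar _ => ∅
  | .lam x t => tFN t \ {x}
end

/-! Free function variables of a term / functor. -/
mutual
def tFF : Term → Set ℕ
  | .var _ => ∅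
  | .zero => ∅
  | .empt => ∅
  | .succ t => tFF t
  | .sing t => tFF t
  | .lh t => tFF t
  | .seqc t => tFF t
  | .kU t => tFF t
  | .add s t => tFF s ∪ tFF t
  | .mul s t => tFF s ∪ tFF t
  | .sub s t => tFF s ∪ tFF t
  | .pair s t => tFF s ∪ tFF t
  | .cat s t => tFF s ∪ tFF t
  | .kT e x y => tFF e ∪ tFF x ∪ tFF y
  | .app φ t => fFF φ ∪ tFF t
  | .bar φ t => fFF φ ∪ tFF t
def fFF : Func → Set ℕ
  | .fvar a => {a}
  | .lam _ t => tFF t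
end

/-! Substitution of a term for a number variable in terms / functors. -/
mutual
def tSubN (n : ℕ) (u : Term) : Term → Term
  | .var m => if m = n then u else .var m
  | .zero => .zero
  | .empt => .empt
  | .succ t => .succ (tSubN n u t)
  | .sing t => .sing (tSubN n u t)
  | .lh t => .lh (tSubN n u t)
  | .seqc t => .seqc (tSubN n u t)
  | .kU t => .kU (tSubN n u t)
  | .add s t => .add (tSubN n u s) (tSubN n u t)
  | .mul s t => .mul (tSubN n u s) (tSubN n u t)
  | .sub s t => .sub (tSubN n u s) (tSubN n u t)
  | .pair s t => .pair (tSubN n u s) (tSubN n u t)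
  | .cat s t => .cat (tSubN n u s) (tSubN n u t)
  | .kT e x y => .kT (tSubN n u e) (tSubN n u x) (tSubN n u y)
  | .app φ t => .app (fSubN n u φ) (tSubN n u t)
  | .bar φ t => .bar (fSubN n u φ) (tSubN n u t)
def fSubN (n : ℕ) (u : Term) : Func → Func
  | .fvar a => .fvar a
  | .lam x t => if x = n then .lam x t else .lam x (tSubN n u t)
end

/-! Substitution of a functor for a function variable in terms / functors. -/
mutual
def tSubF (a : ℕ) (ψ : Func) : Term → Term
  | .var m => .var m
  | .zero => .zero
  | .empt => .empt
  | .succ t => .succ (tSubF a ψ t)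
  | .sing t => .sing (tSubF a ψ t)
  | .lh t => .lh (tSubF a ψ t)
  | .seqc t => .seqc (tSubF a ψ t)
  | .kU t => .kU (tSubF a ψ t)
  | .add s t => .add (tSubF a ψ s) (tSubF a ψ t)
  | .mul s t => .mul (tSubF a ψ s) (tSubF a ψ t)
  | .sub s t => .sub (tSubF a ψ s) (tSubF a ψ t)
  | .pair s t => .pair (tSubF a ψ s) (tSubF a ψ t)
  | .cat s t => .cat (tSubF a ψ s) (tSubF a ψ t)
  | .kT e x y => .kT (tSubF a ψ e) (tSubF a ψ x) (tSubF a ψ y)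
  | .app φ t => .app (fSubF a ψ φ) (tSubF a ψ t)
  | .bar φ t => .bar (fSubF a ψ φ) (tSubF a ψ t)
def fSubF (a : ℕ) (ψ : Func) : Func → Func
  | .fvar b => if b = a then ψ else .fvar b
  | .lam x t => .lam x (tSubF a ψ t)
end

/-! "u is free for (the number variable) n" in a term/functor
(no free occurrence of n lies within a λ binding a variable free in u). -/
mutual
def tFForN (u : Term) (n : ℕ) : Term → Prop
  | .var _ => True
  | .zero => True
  | .empt => True
  | .succ t => tFForN u n t
  | .sing t => tFForN u n t
  | .lh t => tFForN u n t
  | .seqc t => tFForN u n t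
  | .kU t => tFForN u n t
  | .add s t => tFForN u n s ∧ tFForN u n t
  | .mul s t => tFForN u n s ∧ tFForN u n t
  | .sub s t => tFForN u n s ∧ tFForN u n t
  | .pair s t => tFForN u n s ∧ tFForN u n t
  | .cat s t => tFForN u n s ∧ tFForN u n t
  | .kT e x y => tFForN u n e ∧ tFForN u n x ∧ tFForN u n y
  | .app φ t => fFForN u n φ ∧ tFForN u n t
  | .bar φ t => fFForN u n φ ∧ tFForN u n t
def fFForN (u : Term) (n : ℕ) : Func → Prop
  | .fvar _ => True
  | .lam x t => x = n ∨ n ∉ tFN t ∨ (x ∉ tFN u ∧ tFForN u n t)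
end

/-! "ψ is free for (the function variable) a" in a term/functor. -/
mutual
def tFForF (ψ : Func) (a : ℕ) : Term → Prop
  | .var _ => True
  | .zero => True
  | .empt => True
  | .succ t => tFForF ψ a t
  | .sing t => tFForF ψ a t
  | .lh t => tFForF ψ a t
  | .seqc t => tFForF ψ a t
  | .kU t => tFForF ψ a t
  | .add s t => tFForF ψ a s ∧ tFForF ψ a t
  | .mul s t => tFForF ψ a s ∧ tFForF ψ a t
  | .sub s t => tFForF ψ a s ∧ tFForF ψ a t
  | .pair s t => tFForF ψ a s ∧ tFForF ψ a t
  | .cat s t => tFForF ψ a s ∧ tFForF ψ a t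
  | .kT e x y => tFForF ψ a e ∧ tFForF ψ a x ∧ tFForF ψ a y
  | .app φ t => fFForF ψ a φ ∧ tFForF ψ a t
  | .bar φ t => fFForF ψ a φ ∧ tFForF ψ a t
def fFForF (ψ : Func) (a : ℕ) : Func → Prop
  | .fvar _ => True
  | .lam x t => a ∉ tFF t ∨ (x ∉ fFN ψ ∧ tFForF ψ a t)
end

/-- Formulas of the two-sorted language; prime formulas are equations between
terms of type 0 (equality of type 1 is defined extensionally). -/
inductive Formula : Type
  | eq     : Term → Term → Formula
  | falsum : Formula
  | and    : Formula → Formula → Formula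
  | or     : Formula → Formula → Formula
  | imp    : Formula → Formula → Formula
  | allN   : ℕ → Formula → Formula
  | exN    : ℕ → Formula → Formula
  | allF   : ℕ → Formula → Formula
  | exF    : ℕ → Formula → Formula

namespace Formula

/-- ¬A -/
def neg (A : Formula) : Formula := A.imp .falsum
/-- ¬¬A -/
def nneg (A : Formula) : Formula := neg (neg A)
/-- A ↔ B -/
def iff (A B : Formula) : Formula := (A.imp B).and (B.imp A)

end Formula

open Formula

/-- s ≤ t, expressed by the primitive recursive constant ∸. -/
def tle (s t : Term) : Formula := .eq (Term.sub s t) Term.zero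
/-- s < t -/
def tlt (s t : Term) : Formula := tle (Term.succ s) t
/-- Seq(w) : w codes a finite sequence. -/
def seqF (t : Term) : Formula := .eq (Term.seqc t) Term.zero

/-- Free number variables of a formula. -/
def freeN : Formula → Set ℕ
  | .eq s t => tFN s ∪ tFN t
  | .falsum => ∅
  | .and A B => freeN A ∪ freeN B
  | .or A B => freeN A ∪ freeN B
  | .imp A B => freeN A ∪ freeN B
  | .allN x A => freeN A \ {x}
  | .exN x A => freeN A \ {x}
  | .allF _ A => freeN A
  | .exF _ A => freeN A

/-- Free function variables of a formula. -/
def freeF : Formula → Set ℕ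
  | .eq s t => tFF s ∪ tFF t
  | .falsum => ∅
  | .and A B => freeF A ∪ freeF B
  | .or A B => freeF A ∪ freeF B
  | .imp A B => freeF A ∪ freeF B
  | .allN _ A => freeF A
  | .exN _ A => freeF A
  | .allF a A => freeF A \ {a}
  | .exF a A => freeF A \ {a}

/-- Substitution A[u/n] of a term u for the number variable n. -/
def subN (n : ℕ) (u : Term) : Formula → Formula
  | .eq s t => .eq (tSubN n u s) (tSubN n u t)
  | .falsum => .falsum
  | .and A B => .and (subN n u A) (subN n u B)
  | .or A B => .or (subN n u A) (subN n u B)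
  | .imp A B => .imp (subN n u A) (subN n u B)
  | .allN x A => if x = n then .allN x A else .allN x (subN n u A)
  | .exN x A => if x = n then .exN x A else .exN x (subN n u A)
  | .allF a A => .allF a (subN n u A)
  | .exF a A => .exF a (subN n u A)

/-- Substitution A[ψ/a] of a functor ψ for the function variable a. -/
def subF (a : ℕ) (ψ : Func) : Formula → Formula
  | .eq s t => .eq (tSubF a ψ s) (tSubF a ψ t)
  | .falsum => .falsum
  | .and A B => .and (subF a ψ A) (subF a ψ B)
  | .or A B => .or (subF a ψ A) (subF a ψ B)
  | .imp A B => .imp (subF a ψ A) (subF a ψ B)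
  | .allN x A => .allN x (subF a ψ A)
  | .exN x A => .exN x (subF a ψ A)
  | .allF b A => if b = a then .allF b A else .allF b (subF a ψ A)
  | .exF b A => if b = a then .exF b A else .exF b (subF a ψ A)

/-- "The term u is free for the number variable n in A". -/
def FreeForN (u : Term) (n : ℕ) : Formula → Prop
  | .eq s t => tFForN u n s ∧ tFForN u n t
  | .falsum => True
  | .and A B => FreeForN u n A ∧ FreeForN u n B
  | .or A B => FreeForN u n A ∧ FreeForN u n B
  | .imp A B => FreeForN u n A ∧ FreeForN u n B
  | .allN m A => m = n ∨ n ∉ freeN A ∨ (m ∉ tFN u ∧ FreeForN u n A)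
  | .exN m A => m = n ∨ n ∉ freeN A ∨ (m ∉ tFN u ∧ FreeForN u n A)
  | .allF b A => n ∉ freeN A ∨ (b ∉ tFF u ∧ FreeForN u n A)
  | .exF b A => n ∉ freeN A ∨ (b ∉ tFF u ∧ FreeForN u n A)

/-- "The functor ψ is free for the function variable a in A". -/
def FreeForF (ψ : Func) (a : ℕ) : Formula → Prop
  | .eq s t => tFForF ψ a s ∧ tFForF ψ a t
  | .falsum => True
  | .and A B => FreeForF ψ a A ∧ FreeForF ψ a B
  | .or A B => FreeForF ψ a A ∧ FreeForF ψ a B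
  | .imp A B => FreeForF ψ a A ∧ FreeForF ψ a B
  | .allN m A => a ∉ freeF A ∨ (m ∉ fFN ψ ∧ FreeForF ψ a A)
  | .exN m A => a ∉ freeF A ∨ (m ∉ fFN ψ ∧ FreeForF ψ a A)
  | .allF b A => b = a ∨ a ∉ freeF A ∨ (b ∉ fFF ψ ∧ FreeForF ψ a A)
  | .exF b A => b = a ∨ a ∉ freeF A ∨ (b ∉ fFF ψ ∧ FreeForF ψ a A)

/-- Derivability from a set of (mathematical) axioms by two-sorted
intuitionistic predicate logic with equality at type 0 as sole prime relation;
a Hilbert-style system with modus ponens and generalization. -/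
inductive Prov (T : Set Formula) : Formula → Prop
  | ax {A : Formula} (h : A ∈ T) : Prov T A
  | k {A B : Formula} : Prov T (A.imp (B.imp A))
  | s {A B C : Formula} : Prov T ((A.imp (B.imp C)).imp ((A.imp B).imp (A.imp C)))
  | andI {A B : Formula} : Prov T (A.imp (B.imp (A.and B)))
  | andE1 {A B : Formula} : Prov T ((A.and B).imp A)
  | andE2 {A B : Formula} : Prov T ((A.and B).imp B)
  | orI1 {A B : Formula} : Prov T (A.imp (A.or B))
  | orI2 {A B : Formula} : Prov T (B.imp (A.or B))
  | orE {A B C : Formula} : Prov T ((A.imp C).imp ((B.imp C).imp ((A.or B).imp C)))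
  | exfalso {A : Formula} : Prov T (Formula.falsum.imp A)
  | mp {A B : Formula} : Prov T (A.imp B) → Prov T A → Prov T B
  | allNE {n : ℕ} {A : Formula} {u : Term} (h : FreeForN u n A) :
      Prov T ((Formula.allN n A).imp (subN n u A))
  | allNI {n : ℕ} {A B : Formula} (h : n ∉ freeN A) :
      Prov T (A.imp B) → Prov T (A.imp (Formula.allN n B))
  | exNI {n : ℕ} {A : Formula} {u : Term} (h : FreeForN u n A) :
      Prov T ((subN n u A).imp (Formula.exN n A))
  | exNE {n : ℕ} {A B : Formula} (h : n ∉ freeN B) :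
      Prov T (A.imp B) → Prov T ((Formula.exN n A).imp B)
  | allFE {a : ℕ} {A : Formula} {ψ : Func} (h : FreeForF ψ a A) :
      Prov T ((Formula.allF a A).imp (subF a ψ A))
  | allFI {a : ℕ} {A B : Formula} (h : a ∉ freeF A) :
      Prov T (A.imp B) → Prov T (A.imp (Formula.allF a B))
  | exFI {a : ℕ} {A : Formula} {ψ : Func} (h : FreeForF ψ a A) :
      Prov T ((subF a ψ A).imp (Formula.exF a A))
  | exFE {a : ℕ} {A B : Formula} (h : a ∉ freeF B) :
      Prov T (A.imp B) → Prov T ((Formula.exF a A).imp B)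
  | genN {n : ℕ} {A : Formula} : Prov T A → Prov T (Formula.allN n A)
  | genF {a : ℕ} {A : Formula} : Prov T A → Prov T (Formula.allF a A)

/-- Two systems (sets of axioms over the same language) have the same theorems. -/
def SameTheory (T₁ T₂ : Set Formula) : Prop := ∀ A, Prov T₁ A ↔ Prov T₂ A

/-- T₁ is a subsystem of T₂: every theorem of T₁ is a theorem of T₂. -/
def Subsystem (T₁ T₂ : Set Formula) : Prop := ∀ A, Prov T₁ A → Prov T₂ A

/-- The Gödel–Gentzen negative translation: hereditarily replace A∨B by
¬(¬A & ¬B) and ∃A by ¬∀¬A (prime formulas, being equations between terms of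
type 0, are their own translations). -/
def gTrans : Formula → Formula
  | .eq s t => .eq s t
  | .falsum => .falsum
  | .and A B => .and (gTrans A) (gTrans B)
  | .or A B => Formula.neg ((Formula.neg (gTrans A)).and (Formula.neg (gTrans B)))
  | .imp A B => .imp (gTrans A) (gTrans B)
  | .allN x A => .allN x (gTrans A)
  | .exN x A => Formula.neg (.allN x (Formula.neg (gTrans A)))
  | .allF a A => .allF a (gTrans A)
  | .exF a A => Formula.neg (.allF a (Formula.neg (gTrans A)))

/-! ### The base system IA₁ -/

/-- Universally valid equations: the defining axioms of the finitely many
primitive recursive constants of the language (all equations true in the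
intended interpretation under every assignment). -/
def validEq : Set Formula :=
  {F | ∃ s t : Term, F = Formula.eq s t ∧ ∀ ρ σ, evalT ρ σ s = evalT ρ σ t}

/-- Leibniz equality schema (includes the open equality axiom
∀x∀y(x=y → α(x)=α(y))). -/
def eqAx : Set Formula :=
  {F | ∃ (n : ℕ) (s t : Term) (A : Formula),
    FreeForN s n A ∧ FreeForN t n A ∧
    F = (Formula.eq s t).imp ((subN n s A).imp (subN n t A))}

/-- Successor axioms. -/
def sucAx : Set Formula :=
  {F | ∃ s t : Term, F = (Formula.eq (Term.succ s) (Term.succ t)).imp (.eq s t)} ∪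
  {F | ∃ t : Term, F = Formula.neg (.eq (Term.succ t) Term.zero)}

/-- Mathematical induction, for all formulas of the two-sorted language. -/
def indAx : Set Formula :=
  {F | ∃ (x : ℕ) (A : Formula),
    F = ((subN x Term.zero A).and
          (Formula.allN x (A.imp (subN x (Term.succ (Term.var x)) A)))).imp
        (Formula.allN x A)}

/-- λ-reduction: (λx.t)(s) = t[s/x], for s free for x in t. -/
def lamAx : Set Formula :=
  {F | ∃ (x : ℕ) (t s : Term), tFForN s x t ∧
    F = Formula.eq (Term.app (Func.lam x t) s) (tSubN x s t)}

/-- IA₁: two-sorted intuitionistic arithmetic. -/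
def IA1 : Set Formula := validEq ∪ eqAx ∪ sucAx ∪ indAx ∪ lamAx

/-- The double negation schema ¬¬A → A of classical logic. -/
def DNE : Set Formula := {F | ∃ A : Formula, F = (Formula.nneg A).imp A}

/-- The Gödel–Gentzen negative translations of all theorems of S + (¬¬A→A). -/
def gThms (S : Set Formula) : Set Formula :=
  {F | ∃ A : Formula, Prov (S ∪ DNE) A ∧ F = gTrans A}

/-- The minimum classical extension S^{+g} of S: the least extension of S
proving the negative translation of every theorem of S + (¬¬A→A). -/
def minClassExt (S : Set Formula) : Set Formula := S ∪ gThms S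

/-! ### Classes of formulas -/

/-- "Quantifier-free" formulas: no function quantifiers and only bounded
number quantifiers. -/
inductive IsQF : Formula → Prop
  | eq (s t : Term) : IsQF (.eq s t)
  | falsum : IsQF .falsum
  | and {A B} : IsQF A → IsQF B → IsQF (A.and B)
  | or {A B} : IsQF A → IsQF B → IsQF (A.or B)
  | imp {A B} : IsQF A → IsQF B → IsQF (A.imp B)
  | ballN {x t A} (h : x ∉ tFN t) (hA : IsQF A) :
      IsQF (.allN x ((tle (Term.var x) t).imp A))
  | bexN {x t A} (h : x ∉ tFN t) (hA : IsQF A) :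
      IsQF (.exN x ((tle (Term.var x) t).and A))

/-- Arithmetical formulas: no function quantifiers (function parameters allowed). -/
def IsArith : Formula → Prop
  | .eq _ _ => True
  | .falsum => True
  | .and A B => IsArith A ∧ IsArith B
  | .or A B => IsArith A ∧ IsArith B
  | .imp A B => IsArith A ∧ IsArith B
  | .allN _ A => IsArith A
  | .exN _ A => IsArith A
  | .allF _ _ => False
  | .exF _ _ => False

/-- Negative formulas: containing neither ∨ nor ∃. -/
def IsNeg : Formula → Prop
  | .eq _ _ => True
  | .falsum => True
  | .and A B => IsNeg A ∧ IsNeg B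
  | .or _ _ => False
  | .imp A B => IsNeg A ∧ IsNeg B
  | .allN _ A => IsNeg A
  | .exN _ _ => False
  | .allF _ A => IsNeg A
  | .exF _ _ => False

/-! ### The axiom schemas -/

/-- An instance of countable choice AC₀₀ : ∀x∃yA(x,y) → ∃α∀xA(x,α(x)). -/
def ac00Inst (x y a : ℕ) (A : Formula) : Formula :=
  (Formula.allN x (.exN y A)).imp
    (.exF a (.allN x (subN y (Term.app (Func.fvar a) (Term.var x)) A)))

def ac00Side (x y a : ℕ) (A : Formula) : Prop :=
  x ≠ y ∧ a ∉ freeF A ∧ FreeForN (Term.app (Func.fvar a) (Term.var x)) y A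

/-- AC₀₀ (full countable choice for numbers). -/
def AC00 : Set Formula :=
  {F | ∃ x y a A, ac00Side x y a A ∧ F = ac00Inst x y a A}

/-- qf-AC₀₀. -/
def qfAC00 : Set Formula :=
  {F | ∃ x y a A, IsQF A ∧ ac00Side x y a A ∧ F = ac00Inst x y a A}

/-- AC^Ar₀₀ (arithmetical countable choice). -/
def arAC00 : Set Formula :=
  {F | ∃ x y a A, IsArith A ∧ ac00Side x y a A ∧ F = ac00Inst x y a A}

/-- ∃!y A, rendered as ∃yA & ∀y∀z(A & A[z/y] → y = z). -/
def exUnique (y z : ℕ) (A : Formula) : Formula :=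
  (Formula.exN y A).and
    (.allN y (.allN z ((A.and (subN y (Term.var z) A)).imp
      (.eq (Term.var y) (Term.var z)))))

/-- AC₀₀! (countable comprehension): ∀x∃!yA(x,y) → ∃α∀xA(x,α(x)). -/
def AC00u : Set Formula :=
  {F | ∃ x y z a A, z ≠ y ∧ z ∉ freeN A ∧ FreeForN (Term.var z) y A ∧
    ac00Side x y a A ∧
    F = (Formula.allN x (exUnique y z A)).imp
          (.exF a (.allN x (subN y (Term.app (Func.fvar a) (Term.var x)) A)))}

/-- AC₀₁ : ∀x∃αA(x,α) → ∃β∀xA(x,λy.β(⟨x,y⟩)). -/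
def AC01 : Set Formula :=
  {F | ∃ (x a b y : ℕ) (A : Formula), b ∉ freeF A ∧ b ≠ a ∧ y ≠ x ∧
    FreeForF (Func.lam y (Term.app (Func.fvar b)
      (Term.pair (Term.var x) (Term.var y)))) a A ∧
    F = (Formula.allN x (.exF a A)).imp
          (.exF b (.allN x (subF a (Func.lam y (Term.app (Func.fvar b)
            (Term.pair (Term.var x) (Term.var y)))) A)))}

/-- CF_d : ∀x(A(x) ∨ ¬A(x)) → ∃α∀x[α(x)≤1 & (α(x)=0 ↔ A(x))]. -/
def CFd : Set Formula :=
  {F | ∃ (x a : ℕ) (A : Formula), a ∉ freeF A ∧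
    F = (Formula.allN x (A.or (Formula.neg A))).imp
          (.exF a (.allN x ((tle (Term.app (Func.fvar a) (Term.var x))
              (Term.succ Term.zero)).and
            (Formula.iff (.eq (Term.app (Func.fvar a) (Term.var x)) Term.zero) A))))}

/-- WCF₀⁻ : ¬¬∃ζ∀x(ζ(x)=0 ↔ A(x)) for negative A. -/
def WCF0neg : Set Formula :=
  {F | ∃ (x z : ℕ) (A : Formula), IsNeg A ∧ z ∉ freeF A ∧
    F = Formula.nneg (.exF z (.allN x
      (Formula.iff (.eq (Term.app (Func.fvar z) (Term.var x)) Term.zero) A)))}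

/-- Markov's Principle MP₁ : ∀α(¬∀x¬α(x)=0 → ∃x α(x)=0). -/
def MP1 : Formula :=
  .allF 0 ((Formula.neg (.allN 0 (Formula.neg
      (.eq (Term.app (Func.fvar 0) (Term.var 0)) Term.zero)))).imp
    (.exN 0 (.eq (Term.app (Func.fvar 0) (Term.var 0)) Term.zero)))

/-- Σ⁰₁-DNS₀ : ∀α[∀x¬¬∃y α(⟨x,y⟩)=0 → ¬¬∀x∃y α(⟨x,y⟩)=0]. -/
def Sigma01DNS0 : Formula :=
  .allF 0 ((Formula.allN 0 (Formula.nneg (.exN 1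
      (.eq (Term.app (Func.fvar 0) (Term.pair (Term.var 0) (Term.var 1))) Term.zero)))).imp
    (Formula.nneg (.allN 0 (.exN 1
      (.eq (Term.app (Func.fvar 0) (Term.pair (Term.var 0) (Term.var 1))) Term.zero)))))

/-- DNS₁ : ∀ρ[∀α¬¬∃x ρ(ᾱ(x))=0 → ¬¬∀α∃x ρ(ᾱ(x))=0]. -/
def DNS1 : Formula :=
  .allF 0 ((Formula.allF 1 (Formula.nneg (.exN 0
      (.eq (Term.app (Func.fvar 0) (Term.bar (Func.fvar 1) (Term.var 0))) Term.zero)))).imp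
    (Formula.nneg (.allF 1 (.exN 0
      (.eq (Term.app (Func.fvar 0) (Term.bar (Func.fvar 1) (Term.var 0))) Term.zero)))))

/-- B(α) : α is a binary sequence, ∀x α(x) ≤ 1. -/
def binF (a x : ℕ) : Formula :=
  .allN x (tle (Term.app (Func.fvar a) (Term.var x)) (Term.succ Term.zero))

/-- GDK : ∀ρ[∀α_{B(α)}¬¬∃x ρ(ᾱ(x))=0 → ¬¬∀α_{B(α)}∃x ρ(ᾱ(x))=0]. -/
def GDK : Formula :=
  .allF 0 ((Formula.allF 1 ((binF 1 1).imp (Formula.nneg (.exN 0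
      (.eq (Term.app (Func.fvar 0) (Term.bar (Func.fvar 1) (Term.var 0))) Term.zero))))).imp
    (Formula.nneg (.allF 1 ((binF 1 1).imp (.exN 0
      (.eq (Term.app (Func.fvar 0) (Term.bar (Func.fvar 1) (Term.var 0))) Term.zero))))))

/-- FT₁ (the fan theorem):
∀ρ[∀α_{B(α)}∃x ρ(ᾱ(x))=0 → ∃n∀α_{B(α)}∃x≤n ρ(ᾱ(x))=0]. -/
def FT1 : Formula :=
  .allF 0 ((Formula.allF 1 ((binF 1 1).imp (.exN 0
      (.eq (Term.app (Func.fvar 0) (Term.bar (Func.fvar 1) (Term.var 0))) Term.zero)))).imp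
    (.exN 2 (.allF 1 ((binF 1 1).imp (.exN 0 ((tle (Term.var 0) (Term.var 2)).and
      (.eq (Term.app (Func.fvar 0) (Term.bar (Func.fvar 1) (Term.var 0))) Term.zero)))))))

/-- An instance of bar induction BI₁ with bar ρ (function variable r) and
inductive predicate A(w). -/
def biInst (r aa xv w s : ℕ) (A : Formula) : Formula :=
  ((Formula.allF aa (.exN xv (.eq
      (Term.app (Func.fvar r) (Term.bar (Func.fvar aa) (Term.var xv))) Term.zero))).and
    ((Formula.allN w (((seqF (Term.var w)).and
        (.eq (Term.app (Func.fvar r) (Term.var w)) Term.zero)).imp A)).and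
      (Formula.allN w (((seqF (Term.var w)).and
        (.allN s (subN w (Term.cat (Term.var w)
          (Term.sing (Term.succ (Term.var s)))) A))).imp A)))).imp
  (subN w Term.empt A)

/-- BI₁ (bar induction, Kleene's ˣ26.3b). -/
def BI1 : Set Formula :=
  {F | ∃ r aa xv w s A, aa ≠ r ∧ aa ∉ freeF A ∧ s ≠ w ∧ s ∉ freeN A ∧
    FreeForN (Term.cat (Term.var w) (Term.sing (Term.succ (Term.var s)))) w A ∧
    F = biInst r aa xv w s A}

/-- Π⁰₁-WCF₀ : ∀α¬¬∃ζ∀x(ζ(x)=0 ↔ ∀y α(⟨x,y⟩)=0). -/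
def Pi01WCF0 : Formula :=
  .allF 0 (Formula.nneg (.exF 1 (.allN 0
    (Formula.iff (.eq (Term.app (Func.fvar 1) (Term.var 0)) Term.zero)
      (.allN 1 (.eq (Term.app (Func.fvar 0)
        (Term.pair (Term.var 0) (Term.var 1))) Term.zero))))))

/-- Π¹₁-WCF₀ : ∀γ¬¬∃ζ∀x(ζ(x)=0 ↔ ∀α∃y γ(ᾱ(⟨x,y⟩))=0). -/
def Pi11WCF0 : Formula :=
  .allF 0 (Formula.nneg (.exF 1 (.allN 0
    (Formula.iff (.eq (Term.app (Func.fvar 1) (Term.var 0)) Term.zero)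
      (.allF 2 (.exN 1 (.eq (Term.app (Func.fvar 0)
        (Term.bar (Func.fvar 2) (Term.pair (Term.var 0) (Term.var 1)))) Term.zero)))))))

/-- T(e,x,y) as a formula. -/
def TFml (e x y : Term) : Formula := .eq (Term.kT e x y) Term.zero

/-- GR(φ): "φ is general recursive",
∃e[∀x∃yT(e,x,y) & ∀x∀y(T(e,x,y) → U(y)=φ(x))]. -/
def GRof (φ : Func) : Formula :=
  .exN 0 ((Formula.allN 1 (.exN 2 (TFml (Term.var 0) (Term.var 1) (Term.var 2)))).and
    (.allN 1 (.allN 2 ((TFml (Term.var 0) (Term.var 1) (Term.var 2)).imp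
      (.eq (Term.kU (Term.var 2)) (Term.app φ (Term.var 1)))))))

/-- Church's Thesis CT₁ : ∀α GR(α). -/
def CT1 : Formula := .allF 0 (GRof (Func.fvar 0))

/-- ∀α¬¬GR(α). -/
def nnGR : Formula := .allF 0 (Formula.nneg (GRof (Func.fvar 0)))

/-- {τ}[α](x) = y in Kleene's sense: τ(⟨x⟩∗ᾱ(y)) > 0 with minimal y,
used to state continuous choice. -/
def ccApp (t a x y : ℕ) : Formula :=
  .eq (Term.app (Func.fvar t)
    (Term.cat (Term.sing (Term.var x)) (Term.bar (Func.fvar a) (Term.var y)))) Term.zero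

/-- An instance of Kleene's strong continuous choice CC₁₁ (Brouwer's principle
for functions, ˣ27.1): ∀α∃βA(α,β) → ∃τ∀α[{τ}[α] is completely defined &
∀β({τ}[α] = β → A(α,β))]. -/
def cc11Inst (a b t x y z : ℕ) (A : Formula) : Formula :=
  (Formula.allF a (.exF b A)).imp
    (.exF t (.allF a
      ((Formula.allN x (.exN y (Formula.neg (ccApp t a x y)))).and
        (.allF b ((Formula.allN x (.exN y
          ((Formula.eq (Term.app (Func.fvar t) (Term.cat (Term.sing (Term.var x))
              (Term.bar (Func.fvar a) (Term.var y))))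
            (Term.succ (Term.app (Func.fvar b) (Term.var x)))).and
           (.allN z ((tlt (Term.var z) (Term.var y)).imp (ccApp t a x z)))))).imp A)))))

/-- CC₁₁ as a schema. -/
def CC11 : Set Formula :=
  {F | ∃ a b t x y z A, t ∉ freeF A ∧ t ≠ a ∧ t ≠ b ∧ a ≠ b ∧
    x ∉ freeN A ∧ y ∉ freeN A ∧ z ∉ freeN A ∧
    x ≠ y ∧ y ≠ z ∧ x ≠ z ∧
    F = cc11Inst a b t x y z A}

/-! ### The systems -/

/-- Intuitionistic recursive analysis IRA = IA₁ + qf-AC₀₀. -/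
def IRA : Set Formula := IA1 ∪ qfAC00

/-- Kleene's basic system B = IA₁ + AC₀₁ + BI₁. -/
def Bsys : Set Formula := IA1 ∪ AC01 ∪ BI1

/-- Markov's recursive analysis MRA = IRA + CT₁ + MP₁. -/
def MRA : Set Formula := IRA ∪ {CT1, MP1}

/-- The subsystems of B considered in Theorem 5.1. -/
def theoremSystems : List (Set Formula) :=
  [IA1, IRA, IA1 ∪ arAC00, IA1 ∪ AC00u, IA1 ∪ AC00, IA1 ∪ AC01,
   IA1 ∪ {FT1}, IRA ∪ {FT1}, IRA ∪ BI1, IA1 ∪ AC00 ∪ BI1, Bsys]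

end NegInterp


namespace NegInterp

/-!
The inclusion `⊇` is immediate: an instance of AC₀₁ is a theorem of IA₁ + AC₀₁ + (¬¬A → A).
For `⊆`, the g-translation of an axiom of IA₁ is again an axiom of IA₁, and the g-translations
of the logical axioms and rules, and of `¬¬A → A`, are derivable as soon as every g-formula `A`
is stable, i.e. `¬¬A → A` is provable. Stability is inherited along `→`, `∧`, `∀` and holds
for negations, so it reduces to equations `s = t`. These are decidable in IA₁: `s = t` is
equivalent to `(s ∸ t) + (t ∸ s) = 0`, and `x = 0 ∨ ¬x = 0` follows by induction on `x`.
-/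

theorem subsystem_of_forall_prov {T₁ T₂ : Set Formula} (h : ∀ B ∈ T₁, Prov T₂ B) :
    Subsystem T₁ T₂ := by
  intro A hA
  induction hA with
  | ax hB => exact h _ hB
  | k => exact .k
  | s => exact .s
  | andI => exact .andI
  | andE1 => exact .andE1
  | andE2 => exact .andE2
  | orI1 => exact .orI1
  | orI2 => exact .orI2
  | orE => exact .orE
  | exfalso => exact .exfalso
  | mp _ _ ih₁ ih₂ => exact .mp ih₁ ih₂
  | allNE hf => exact .allNE hf
  | allNI hn _ ih => exact .allNI hn ih
  | exNI hf => exact .exNI hf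
  | exNE hn _ ih => exact .exNE hn ih
  | allFE hf => exact .allFE hf
  | allFI hn _ ih => exact .allFI hn ih
  | exFI hf => exact .exFI hf
  | exFE hn _ ih => exact .exFE hn ih
  | genN _ ih => exact .genN ih
  | genF _ ih => exact .genF ih

theorem sameTheory_of_subsystem {T₁ T₂ : Set Formula} (h₁₂ : Subsystem T₁ T₂)
    (h₂₁ : Subsystem T₂ T₁) : SameTheory T₁ T₂ :=
  fun A => ⟨h₁₂ A, h₂₁ A⟩

section Hilbert

variable {T : Set Formula} {A B C : Formula}

theorem Prov.imp_of_prov (h : Prov T B) : Prov T (A.imp B) := .mp .k h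

theorem Prov.imp_mp (h₁ : Prov T (A.imp (B.imp C))) (h₂ : Prov T (A.imp B)) :
    Prov T (A.imp C) :=
  .mp (.mp .s h₁) h₂

theorem Prov.imp_self : Prov T (A.imp A) := .mp (.mp .s .k) (.k (B := A))

theorem Prov.imp_trans (h₁ : Prov T (A.imp B)) (h₂ : Prov T (B.imp C)) : Prov T (A.imp C) :=
  .imp_mp (.imp_of_prov h₂) h₁

def imps : List Formula → Formula → Formula
  | [], A => A
  | B :: Γ, A => B.imp (imps Γ A)

theorem imps_append (Γ Δ : List Formula) (A : Formula) :
    imps (Γ ++ Δ) A = imps Γ (imps Δ A) := by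
  induction Γ with
  | nil => rfl
  | cons B Γ ih => simp [imps, ih]

theorem Prov.imps_of_prov {Γ : List Formula} (h : Prov T A) : Prov T (imps Γ A) := by
  induction Γ with
  | nil => exact h
  | cons B Γ ih => exact ih.imp_of_prov

theorem Prov.imps_distrib {Γ : List Formula} :
    Prov T ((imps Γ (A.imp B)).imp ((imps Γ A).imp (imps Γ B))) := by
  induction Γ with
  | nil => exact .imp_self
  | cons C Γ ih => exact .imp_trans (.mp .s (.imp_of_prov ih)) .s

theorem Prov.imps_mp {Γ : List Formula} (h₁ : Prov T (imps Γ (A.imp B)))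
    (h₂ : Prov T (imps Γ A)) : Prov T (imps Γ B) :=
  .mp (.mp imps_distrib h₁) h₂

end Hilbert

/-- Natural deduction with open assumptions `Γ`; it serves only as a readable notation for
Hilbert-style derivations, via `NJ.toProv`. -/
inductive NJ (T : Set Formula) : List Formula → Formula → Prop
  | hyp {Γ : List Formula} {A : Formula} (h : A ∈ Γ) : NJ T Γ A
  | thm {Γ : List Formula} {A : Formula} (h : Prov T A) : NJ T Γ A
  | impI {Γ : List Formula} {A B : Formula} (h : NJ T (A :: Γ) B) : NJ T Γ (A.imp B)
  | impE {Γ : List Formula} {A B : Formula} (h₁ : NJ T Γ (A.imp B)) (h₂ : NJ T Γ A) :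
      NJ T Γ B
  | andI {Γ : List Formula} {A B : Formula} (h₁ : NJ T Γ A) (h₂ : NJ T Γ B) :
      NJ T Γ (A.and B)
  | andE1 {Γ : List Formula} {A B : Formula} (h : NJ T Γ (A.and B)) : NJ T Γ A
  | andE2 {Γ : List Formula} {A B : Formula} (h : NJ T Γ (A.and B)) : NJ T Γ B
  | orE {Γ : List Formula} {A B C : Formula} (h : NJ T Γ (A.or B)) (h₁ : NJ T (A :: Γ) C)
      (h₂ : NJ T (B :: Γ) C) : NJ T Γ C
  | efq {Γ : List Formula} {A : Formula} (h : NJ T Γ .falsum) : NJ T Γ A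

namespace NJ

variable {T : Set Formula} {Γ : List Formula} {A B C : Formula}

theorem h0 : NJ T (A :: Γ) A := .hyp (by simp)
theorem h1 : NJ T (B :: A :: Γ) A := .hyp (by simp)
theorem h2 : NJ T (C :: B :: A :: Γ) A := .hyp (by simp)

theorem prov_imps_concat_of_mem_cons {Δ : List Formula}
    (hΔ : ∀ B ∈ Γ, Prov T (imps Δ B)) : ∀ B ∈ A :: Γ, Prov T (imps (Δ ++ [A]) B) := by
  intro B hB
  rw [imps_append]
  rcases List.mem_cons.mp hB with rfl | hB
  · exact .imps_of_prov .imp_self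
  · exact .imps_mp (.imps_of_prov .k) (hΔ B hB)

/-- The deduction theorem, generalized to an arbitrary prefix `Δ` of antecedents so that the
induction goes through. -/
theorem prov_imps {Δ : List Formula} (h : NJ T Γ A) (hΔ : ∀ B ∈ Γ, Prov T (imps Δ B)) :
    Prov T (imps Δ A) := by
  induction h generalizing Δ with
  | hyp h => exact hΔ _ h
  | thm h => exact .imps_of_prov h
  | impI _ ih =>
    have h := ih (prov_imps_concat_of_mem_cons hΔ)
    rwa [imps_append] at h
  | impE _ _ ih₁ ih₂ => exact .imps_mp (ih₁ hΔ) (ih₂ hΔ)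
  | andI _ _ ih₁ ih₂ => exact .imps_mp (.imps_mp (.imps_of_prov .andI) (ih₁ hΔ)) (ih₂ hΔ)
  | andE1 _ ih => exact .imps_mp (.imps_of_prov .andE1) (ih hΔ)
  | andE2 _ ih => exact .imps_mp (.imps_of_prov .andE2) (ih hΔ)
  | orE _ _ _ ih ih₁ ih₂ =>
    have h₁ := ih₁ (prov_imps_concat_of_mem_cons hΔ)
    have h₂ := ih₂ (prov_imps_concat_of_mem_cons hΔ)
    rw [imps_append] at h₁ h₂
    exact .imps_mp (.imps_mp (.imps_mp (.imps_of_prov .orE) h₁) h₂) (ih hΔ)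
  | efq _ ih => exact .imps_mp (.imps_of_prov .exfalso) (ih hΔ)

theorem toProv (h : NJ T [] A) : Prov T A :=
  prov_imps (Δ := []) h (by simp)

end NJ

theorem tSubN_var_self (n : ℕ) (t : Term) : tSubN n (.var n) t = t := by
  induction t using Term.rec (motive_2 := fun φ => fSubN n (.var n) φ = φ) <;>
    grind [tSubN, fSubN]

theorem tSubN_of_notMem {n : ℕ} {u : Term} {t : Term} (h : n ∉ tFN t) : tSubN n u t = t := by
  induction t using Term.rec (motive_2 := fun φ => n ∉ fFN φ → fSubN n u φ = φ) <;>
    grind [tSubN, fSubN, tFN, fFN]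

theorem tSubF_fvar_self (a : ℕ) (t : Term) : tSubF a (.fvar a) t = t := by
  induction t using Term.rec (motive_2 := fun φ => fSubF a (.fvar a) φ = φ) <;>
    grind [tSubF, fSubF]

theorem tFForN_var (n : ℕ) (t : Term) : tFForN (.var n) n t := by
  induction t using Term.rec (motive_2 := fun φ => fFForN (.var n) n φ) <;>
    grind [tFForN, fFForN, tFN]

theorem tFForN_of_notMem {u : Term} {n : ℕ} {t : Term} (h : n ∉ tFN t) : tFForN u n t := by
  induction t using Term.rec (motive_2 := fun φ => n ∉ fFN φ → fFForN u n φ) <;>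
    grind [tFForN, fFForN, tFN, fFN]

theorem tFForF_fvar (a : ℕ) (t : Term) : tFForF (.fvar a) a t := by
  induction t using Term.rec (motive_2 := fun φ => fFForF (.fvar a) a φ) <;>
    grind [tFForF, fFForF, fFN]

theorem tFN_finite (t : Term) : (tFN t).Finite := by
  induction t using Term.rec (motive_2 := fun φ => (fFN φ).Finite) <;>
    simp_all [tFN, fFN]

theorem subN_var_self (n : ℕ) (A : Formula) : subN n (.var n) A = A := by
  induction A <;> grind [subN, tSubN_var_self]

theorem subF_fvar_self (a : ℕ) (A : Formula) : subF a (.fvar a) A = A := by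
  induction A <;> grind [subF, tSubF_fvar_self]

theorem freeForN_var (n : ℕ) (A : Formula) : FreeForN (.var n) n A := by
  induction A <;> grind [FreeForN, tFForN_var, tFN, tFF]

theorem freeForF_fvar (a : ℕ) (A : Formula) : FreeForF (.fvar a) a A := by
  induction A <;> grind [FreeForF, tFForF_fvar, fFF, fFN]

theorem gTrans_subN (n : ℕ) (u : Term) (A : Formula) :
    gTrans (subN n u A) = subN n u (gTrans A) := by
  induction A <;> grind [subN, gTrans, Formula.neg]

theorem gTrans_subF (a : ℕ) (ψ : Func) (A : Formula) :
    gTrans (subF a ψ A) = subF a ψ (gTrans A) := by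
  induction A <;> grind [subF, gTrans, Formula.neg]

@[simp] theorem freeN_gTrans (A : Formula) : freeN (gTrans A) = freeN A := by
  induction A <;> simp_all [gTrans, freeN, Formula.neg]

@[simp] theorem freeF_gTrans (A : Formula) : freeF (gTrans A) = freeF A := by
  induction A <;> simp_all [gTrans, freeF, Formula.neg]

theorem FreeForN.gTrans {u : Term} {n : ℕ} {A : Formula} (h : FreeForN u n A) :
    FreeForN u n (gTrans A) := by
  induction A <;> grind [NegInterp.gTrans, FreeForN, Formula.neg, freeN, freeN_gTrans]

theorem FreeForF.gTrans {ψ : Func} {a : ℕ} {A : Formula} (h : FreeForF ψ a A) :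
    FreeForF ψ a (gTrans A) := by
  induction A <;> grind [NegInterp.gTrans, FreeForF, Formula.neg, freeF, freeF_gTrans]

def Stable (T : Set Formula) (A : Formula) : Prop := Prov T (A.nneg.imp A)

section Stability

variable {T : Set Formula} {A B C : Formula}

theorem Prov.neg_imp_neg (h : Prov T (A.imp B)) : Prov T (B.neg.imp A.neg) :=
  NJ.toProv (.impI (.impI (.impE .h1 (.impE (.thm h) .h0))))

theorem Prov.imp_neg_comm (h : Prov T (A.imp B.neg)) : Prov T (B.imp A.neg) :=
  NJ.toProv (.impI (.impI (.impE (.impE (.thm h) .h0) .h1)))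

theorem stable_falsum : Stable T .falsum :=
  NJ.toProv (.impI (.impE .h0 (.thm .imp_self)))

theorem stable_neg : Stable T A.neg :=
  NJ.toProv (.impI (.impI (.impE .h1 (.impI (.impE .h0 .h1)))))

theorem Stable.imp (hB : Stable T B) : Stable T (A.imp B) :=
  NJ.toProv (.impI (.impI (.impE (.thm hB)
    (.impI (.impE .h2 (.impI (.impE .h1 (.impE .h0 .h2))))))))

theorem Stable.and (hA : Stable T A) (hB : Stable T B) : Stable T (A.and B) :=
  NJ.toProv (.impI (.andI
    (.impE (.thm hA) (.impI (.impE .h1 (.impI (.impE .h1 (.andE1 .h0))))))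
    (.impE (.thm hB) (.impI (.impE .h1 (.impI (.impE .h1 (.andE2 .h0))))))))

theorem prov_imp_weakOr_left : Prov T (A.imp (A.neg.and B.neg).neg) :=
  NJ.toProv (.impI (.impI (.impE (.andE1 .h0) .h1)))

theorem prov_imp_weakOr_right : Prov T (B.imp (A.neg.and B.neg).neg) :=
  NJ.toProv (.impI (.impI (.impE (.andE2 .h0) .h1)))

theorem Stable.weakOr_elim (hC : Stable T C) :
    Prov T ((A.imp C).imp ((B.imp C).imp ((A.neg.and B.neg).neg.imp C))) :=
  NJ.toProv (.impI (.impI (.impI (.impE (.thm hC) (.impI (.impE .h1 (.andI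
    (.impI (.impE .h1 (.impE (.hyp (by simp)) .h0)))
    (.impI (.impE .h1 (.impE (.hyp (by simp)) .h0))))))))))

theorem prov_allN_imp (x : ℕ) : Prov T ((Formula.allN x A).imp A) := by
  simpa only [subN_var_self] using Prov.allNE (T := T) (freeForN_var x A)

theorem prov_allF_imp (a : ℕ) : Prov T ((Formula.allF a A).imp A) := by
  simpa only [subF_fvar_self] using Prov.allFE (T := T) (freeForF_fvar a A)

theorem Stable.allN (x : ℕ) (h : Stable T A) : Stable T (.allN x A) :=
  .allNI (by simp [Formula.nneg, Formula.neg, freeN])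
    ((prov_allN_imp x).neg_imp_neg.neg_imp_neg.imp_trans h)

theorem Stable.allF (a : ℕ) (h : Stable T A) : Stable T (.allF a A) :=
  .allFI (by simp [Formula.nneg, Formula.neg, freeF])
    ((prov_allF_imp a).neg_imp_neg.neg_imp_neg.imp_trans h)

theorem prov_subN_imp_weakExN {n : ℕ} {u : Term} (h : FreeForN u n A) :
    Prov T ((subN n u A).imp (Formula.allN n A.neg).neg) :=
  (Prov.allNE (A := A.neg) ⟨h, trivial⟩).imp_neg_comm

theorem prov_subF_imp_weakExF {a : ℕ} {ψ : Func} (h : FreeForF ψ a A) :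
    Prov T ((subF a ψ A).imp (Formula.allF a A.neg).neg) :=
  (Prov.allFE (A := A.neg) ⟨h, trivial⟩).imp_neg_comm

theorem Stable.weakExN_elim {n : ℕ} (hB : Stable T B) (hn : n ∉ freeN B)
    (h : Prov T (A.imp B)) : Prov T ((Formula.allN n A.neg).neg.imp B) :=
  (Prov.allNI (by simpa [Formula.neg, freeN]) h.neg_imp_neg).neg_imp_neg.imp_trans hB

theorem Stable.weakExF_elim {a : ℕ} (hB : Stable T B) (ha : a ∉ freeF B)
    (h : Prov T (A.imp B)) : Prov T ((Formula.allF a A.neg).neg.imp B) :=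
  (Prov.allFI (by simpa [Formula.neg, freeF]) h.neg_imp_neg).neg_imp_neg.imp_trans hB

end Stability

section Arithmetic

variable {T : Set Formula}

theorem prov_eq_of_evalT_eq (hT : IA1 ⊆ T) {s t : Term}
    (h : ∀ ρ σ, evalT ρ σ s = evalT ρ σ t) : Prov T (.eq s t) :=
  .ax (hT (.inl (.inl (.inl (.inl ⟨s, t, rfl, h⟩)))))

theorem prov_leibniz (hT : IA1 ⊆ T) {n : ℕ} {s t : Term} {A : Formula}
    (hs : FreeForN s n A) (ht : FreeForN t n A) :
    Prov T ((Formula.eq s t).imp ((subN n s A).imp (subN n t A))) :=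
  .ax (hT (.inl (.inl (.inl (.inr ⟨n, s, t, A, hs, ht, rfl⟩)))))

theorem prov_succ_ne_zero (hT : IA1 ⊆ T) (t : Term) :
    Prov T (Formula.eq (.succ t) .zero).neg :=
  .ax (hT (.inl (.inl (.inr (.inr ⟨t, rfl⟩)))))

theorem prov_induction (hT : IA1 ⊆ T) (x : ℕ) (A : Formula) :
    Prov T (((subN x .zero A).and (Formula.allN x (A.imp (subN x (.succ (.var x)) A)))).imp
      (Formula.allN x A)) :=
  .ax (hT (.inl (.inr ⟨x, A, rfl⟩)))

theorem prov_eq_zero_or_ne (hT : IA1 ⊆ T) (d : Term) :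
    Prov T ((Formula.eq d .zero).or (Formula.eq d .zero).neg) := by
  let A : Formula := (Formula.eq (.var 0) .zero).or (Formula.eq (.var 0) .zero).neg
  have hzero : Prov T (subN 0 .zero A) :=
    .mp .orI1 (prov_eq_of_evalT_eq hT fun _ _ => rfl)
  have hsucc : Prov T (subN 0 (.succ (.var 0)) A) :=
    .mp .orI2 (prov_succ_ne_zero hT (.var 0))
  have hall : Prov T (Formula.allN 0 A) :=
    .mp (prov_induction hT 0 A) (.mp (.mp .andI hzero) (.genN hsucc.imp_of_prov))
  exact .mp (Prov.allNE (u := d) (by simp [A, Formula.neg, FreeForN, tFForN])) hall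

def absDiff (s t : Term) : Term := .add (.sub s t) (.sub t s)

theorem prov_absDiff_eq_zero_of_eq (hT : IA1 ⊆ T) (s t : Term) :
    Prov T ((Formula.eq s t).imp (.eq (absDiff s t) .zero)) := by
  obtain ⟨n, hn⟩ := (tFN_finite s).infinite_compl.nonempty
  let A : Formula := .eq (absDiff s (.var n)) .zero
  have hsub (u : Term) : subN n u A = .eq (absDiff s u) .zero := by
    simp [A, absDiff, subN, tSubN, tSubN_of_notMem hn]
  have hfree (u : Term) : FreeForN u n A := by
    simp [A, absDiff, FreeForN, tFForN, tFForN_of_notMem hn]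
  have h := prov_leibniz (T := T) hT (hfree s) (hfree t)
  rw [hsub, hsub] at h
  exact NJ.toProv (.impI (.impE (.impE (.thm h) .h0)
    (.thm (prov_eq_of_evalT_eq hT fun _ _ => by simp [absDiff, evalT]))))

/-- `ifZero z s t` is `s` when `z = 0` and `t` otherwise. -/
def ifZero (z s t : Term) : Term :=
  .add (.mul s (.sub (.succ .zero) z)) (.mul t (.sub (.succ .zero) (.sub (.succ .zero) z)))

theorem prov_eq_of_absDiff_eq_zero (hT : IA1 ⊆ T) (s t : Term) :
    Prov T ((Formula.eq (absDiff s t) .zero).imp (.eq s t)) := by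
  obtain ⟨n, hn⟩ := ((tFN_finite s).union (tFN_finite t)).infinite_compl.nonempty
  simp only [Set.mem_compl_iff, Set.mem_union, not_or] at hn
  let A : Formula := .eq (ifZero (.var n) s t) t
  let B : Formula := .eq (.var n) t
  have hsubA (u : Term) : subN n u A = .eq (ifZero u s t) t := by
    simp [A, ifZero, subN, tSubN, tSubN_of_notMem hn.1, tSubN_of_notMem hn.2]
  have hsubB (u : Term) : subN n u B = .eq u t := by
    simp [B, subN, tSubN, tSubN_of_notMem hn.2]
  have hfreeA (u : Term) : FreeForN u n A := by
    simp [A, ifZero, FreeForN, tFForN, tFForN_of_notMem hn.1, tFForN_of_notMem hn.2]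
  have hfreeB (u : Term) : FreeForN u n B := by
    simp [B, FreeForN, tFForN, tFForN_of_notMem hn.2]
  -- Leibniz turns the valid `ifZero |s - t| s t = t` into `ifZero 0 s t = t`, i.e. `s = t`.
  have h₁ := prov_leibniz (T := T) hT (hfreeA (absDiff s t)) (hfreeA .zero)
  have h₂ := prov_leibniz (T := T) hT (hfreeB (ifZero .zero s t)) (hfreeB s)
  rw [hsubA, hsubA] at h₁
  rw [hsubB, hsubB] at h₂
  have hzero : Prov T (.eq (ifZero .zero s t) s) :=
    prov_eq_of_evalT_eq hT fun _ _ => by simp [ifZero, evalT]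
  have habs : Prov T (.eq (ifZero (absDiff s t) s t) t) := by
    refine prov_eq_of_evalT_eq hT fun ρ σ => ?_
    simp only [ifZero, absDiff, evalT]
    rcases eq_or_ne (evalT ρ σ s) (evalT ρ σ t) with h | h
    · simp [h]
    · have : 1 - (evalT ρ σ s - evalT ρ σ t + (evalT ρ σ t - evalT ρ σ s)) = 0 := by omega
      simp [this]
  exact NJ.toProv (.impI (.impE (.impE (.thm h₂) (.thm hzero))
    (.impE (.impE (.thm h₁) .h0) (.thm habs))))

theorem stable_eq (hT : IA1 ⊆ T) (s t : Term) : Stable T (.eq s t) :=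
  NJ.toProv (.impI (.orE (.thm (prov_eq_zero_or_ne hT (absDiff s t)))
    (.impE (.thm (prov_eq_of_absDiff_eq_zero hT s t)) .h0)
    (.efq (.impE .h1 (.impI (.impE .h1 (.impE (.thm (prov_absDiff_eq_zero_of_eq hT s t)) .h0)))))))

end Arithmetic

section NegativeTranslation

variable {T : Set Formula}

theorem gTrans_mem_IA1 {B : Formula} (hB : B ∈ IA1) : gTrans B ∈ IA1 := by
  rcases hB with (((⟨s, t, rfl, h⟩ | ⟨n, s, t, A, hs, ht, rfl⟩) | hsuc) | ⟨x, A, rfl⟩) |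
    ⟨x, t, s, h, rfl⟩
  · exact .inl (.inl (.inl (.inl ⟨s, t, rfl, h⟩)))
  · refine .inl (.inl (.inl (.inr ⟨n, s, t, gTrans A, hs.gTrans, ht.gTrans, ?_⟩)))
    simp [gTrans, gTrans_subN]
  · rcases hsuc with ⟨s, t, rfl⟩ | ⟨t, rfl⟩
    · exact .inl (.inl (.inr (.inl ⟨s, t, rfl⟩)))
    · exact .inl (.inl (.inr (.inr ⟨t, rfl⟩)))
  · refine .inl (.inr ⟨x, gTrans A, ?_⟩)
    simp [gTrans, gTrans_subN]
  · exact .inr ⟨x, t, s, h, rfl⟩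

theorem stable_gTrans (hT : IA1 ⊆ T) : ∀ A : Formula, Stable T (gTrans A)
  | .eq s t => stable_eq hT s t
  | .falsum => stable_falsum
  | .and A B => (stable_gTrans hT A).and (stable_gTrans hT B)
  | .or _ _ => stable_neg
  | .imp _ B => (stable_gTrans hT B).imp
  | .allN x A => (stable_gTrans hT A).allN x
  | .exN _ _ => stable_neg
  | .allF a A => (stable_gTrans hT A).allF a
  | .exF _ _ => stable_neg

theorem prov_gTrans_of_prov_union_DNE {S : Set Formula} (hT : IA1 ⊆ T)
    (hS : ∀ B ∈ S, Prov T (gTrans B)) {A : Formula} (h : Prov (S ∪ DNE) A) :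
    Prov T (gTrans A) := by
  induction h with
  | ax hA =>
    rcases hA with hA | ⟨B, rfl⟩
    · exact hS _ hA
    · exact stable_gTrans hT B
  | k => exact .k
  | s => exact .s
  | andI => exact .andI
  | andE1 => exact .andE1
  | andE2 => exact .andE2
  | orI1 => exact prov_imp_weakOr_left
  | orI2 => exact prov_imp_weakOr_right
  | orE => exact (stable_gTrans hT _).weakOr_elim
  | exfalso => exact .exfalso
  | mp _ _ ih₁ ih₂ => exact .mp ih₁ ih₂
  | allNE hf =>
    simpa only [gTrans, gTrans_subN] using Prov.allNE hf.gTrans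
  | allNI hn _ ih => exact .allNI (by simpa using hn) ih
  | exNI hf =>
    simpa only [gTrans, gTrans_subN] using prov_subN_imp_weakExN hf.gTrans
  | exNE hn _ ih => exact (stable_gTrans hT _).weakExN_elim (by simpa using hn) ih
  | allFE hf =>
    simpa only [gTrans, gTrans_subF] using Prov.allFE hf.gTrans
  | allFI ha _ ih => exact .allFI (by simpa using ha) ih
  | exFI hf =>
    simpa only [gTrans, gTrans_subF] using prov_subF_imp_weakExF hf.gTrans
  | exFE ha _ ih => exact (stable_gTrans hT _).weakExF_elim (by simpa using ha) ih
  | genN _ ih => exact .genN ih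
  | genF _ ih => exact .genF ih

theorem sameTheory_minClassExt_IA1_union (X : Set Formula) :
    SameTheory (minClassExt (IA1 ∪ X)) (IA1 ∪ X ∪ gTrans '' X) := by
  have hIA1 : IA1 ⊆ IA1 ∪ X ∪ gTrans '' X :=
    Set.subset_union_left.trans Set.subset_union_left
  refine sameTheory_of_subsystem (subsystem_of_forall_prov ?_) (subsystem_of_forall_prov ?_)
  · rintro B (hB | ⟨C, hC, rfl⟩)
    · exact .ax (.inl hB)
    · refine prov_gTrans_of_prov_union_DNE hIA1 (fun F hF => ?_) hC
      rcases hF with hF | hF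
      · exact .ax (hIA1 (gTrans_mem_IA1 hF))
      · exact .ax (.inr ⟨F, hF, rfl⟩)
  · rintro B (hB | ⟨C, hC, rfl⟩)
    · exact .ax (.inl hB)
    · exact .ax (.inr ⟨C, .ax (.inl (.inr hC)), rfl⟩)

end NegativeTranslation

/-- (IA₁ + AC₀₁)^{+g} = IA₁ + AC₀₁ + (AC₀₁)^g, where (AC₀₁)^g is
the schema of Gödel–Gentzen negative translations of all instances of AC₀₁. -/
theorem statement5 :
    SameTheory (minClassExt (IA1 ∪ AC01)) (IA1 ∪ AC01 ∪ gTrans '' AC01) :=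
  sameTheory_minClassExt_IA1_union AC01

end NegInterp
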